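/- arXiv:1811.12000 — 4 statements merged into one kernel-verified Lean document; each statement's English description precedes it below -/
import Mathlib

section
/- Let h(t₁,t₂) = ρ(‖t₁-t₂‖₂) with ρ ∈ C², ρ(0)=1, ρ'(0)=0. For a unit vector v ∈ ℝ^d, the dipoles ν^η = δ_t - (δ_{t+ηv} - δ_t)/η satisfy ‖ν^η‖²_h → 1 + |ρ''(0)| as η → 0⁺. -/
open Filter Topology

/-!
Writing `a = 1 + 1/η` and `b = 1/η`, so that `a - b = 1`, the squared kernel norm is
`a² + b² - 2ab ρ(η) = 1 + 2ab (1 - ρ(η))`. Since `ρ(0) = 1` and `ρ'(0) = 0`, L'Hôpital's rule gives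
`(1 - ρ(η)) / η² → -ρ''(0)/2`, while `2abη² = 2(1 + η) → 2`; the limit is `1 - ρ''(0) = 1 + |ρ''(0)|`.
-/

lemma tendsto_deriv_div_nhdsGT_zero {f : ℝ → ℝ} (hf' : DifferentiableAt ℝ (deriv f) 0)
    (hf'0 : deriv f 0 = 0) :
    Tendsto (fun x => deriv f x / x) (𝓝[>] 0) (𝓝 (deriv (deriv f) 0)) := by
  have hslope := hasDerivAt_iff_tendsto_slope.mp hf'.hasDerivAt
  refine (hslope.mono_left (nhdsWithin_mono 0 fun x hx => ne_of_gt hx)).congr fun x => ?_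
  simp [slope_def_field, hf'0]

lemma tendsto_sub_div_sq_nhdsGT_zero {f : ℝ → ℝ} (hf : Differentiable ℝ f)
    (hf' : DifferentiableAt ℝ (deriv f) 0) (hf'0 : deriv f 0 = 0) :
    Tendsto (fun x => (f 0 - f x) / x ^ 2) (𝓝[>] 0) (𝓝 (-deriv (deriv f) 0 / 2)) := by
  have hnum : Tendsto (fun x => f 0 - f x) (𝓝[>] 0) (𝓝 0) := by
    have h := tendsto_const_nhds (x := f 0).sub (hf.continuous.tendsto 0)
    rw [sub_self] at h
    exact h.mono_left nhdsWithin_le_nhds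
  have hden : Tendsto (fun x : ℝ => x ^ 2) (𝓝[>] 0) (𝓝 0) := by
    simpa using ((continuous_pow 2).tendsto (0 : ℝ)).mono_left nhdsWithin_le_nhds
  have hratio : Tendsto (fun x => -deriv f x / (2 * x)) (𝓝[>] 0)
      (𝓝 (-deriv (deriv f) 0 / 2)) := by
    have h := (tendsto_deriv_div_nhdsGT_zero hf' hf'0).mul_const (-1 / 2)
    rw [show deriv (deriv f) 0 * (-1 / 2) = -deriv (deriv f) 0 / 2 by ring] at h
    refine h.congr' ?_
    filter_upwards [self_mem_nhdsWithin] with x (hx : 0 < x)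
    field_simp
  refine HasDerivAt.lhopital_zero_nhdsGT (f' := fun x => -deriv f x) (g' := fun x => 2 * x)
    (Eventually.of_forall fun x => (hf x).hasDerivAt.const_sub (f 0))
    (Eventually.of_forall fun x => by simpa [mul_comm] using hasDerivAt_pow 2 x) ?_ hnum hden
    hratio
  filter_upwards [self_mem_nhdsWithin] with x hx
  exact mul_ne_zero two_ne_zero (ne_of_gt hx)

lemma dipole_norm_sq_eq {η : ℝ} (hη : η ≠ 0) (r : ℝ) :
    (1 + 1 / η) ^ 2 + (1 / η) ^ 2 - 2 * (1 + 1 / η) * (1 / η) * r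
      = 1 + 2 * (1 + η) * ((1 - r) / η ^ 2) := by
  field_simp
  ring

/-- For the dipoles `ν^η = (1+1/η)δ_t - (1/η)δ_{t+ηv}` and the kernel
`h(t₁,t₂) = ρ(‖t₁-t₂‖₂)` with `ρ ∈ C²`, `ρ(0)=1`, `ρ'(0)=0`, `ρ''(0)<0`,
the kernel norm `‖ν^η‖²_h = Σᵢⱼ cᵢcⱼ ρ(‖xᵢ-xⱼ‖)` tends to `1 + |ρ''(0)|` as `η → 0⁺`. -/
theorem dipole_norm_tendsto {d : ℕ} (ρ : ℝ → ℝ)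
    (hρ : ContDiff ℝ 2 ρ) (hρ0 : ρ 0 = 1) (hρ'0 : deriv ρ 0 = 0)
    (hρ'' : deriv (deriv ρ) 0 < 0)
    (t v : EuclideanSpace ℝ (Fin d)) (hv : ‖v‖ = 1) :
    Tendsto (fun η : ℝ =>
        (1 + 1/η)^2 * ρ ‖t - t‖ + (1/η)^2 * ρ ‖(t + η • v) - (t + η • v)‖
          - 2 * (1 + 1/η) * (1/η) * ρ ‖t - (t + η • v)‖)
      (𝓝[>] 0) (𝓝 (1 + |deriv (deriv ρ) 0|)) := by
  have hρ' : ContDiff ℝ 1 (deriv ρ) := (contDiff_succ_iff_deriv.mp hρ).2.2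
  have hquot := tendsto_sub_div_sq_nhdsGT_zero (hρ.differentiable two_ne_zero)
    (hρ'.differentiable one_ne_zero 0) hρ'0
  rw [hρ0] at hquot
  have hfactor : Tendsto (fun η : ℝ => 2 * (1 + η)) (𝓝[>] 0) (𝓝 2) := by
    have h : Continuous fun η : ℝ => 2 * (1 + η) := by fun_prop
    simpa using (h.tendsto 0).mono_left nhdsWithin_le_nhds
  have hlim := tendsto_const_nhds (x := (1 : ℝ)).add (hfactor.mul hquot)
  rw [show 1 + 2 * (-deriv (deriv ρ) 0 / 2) = 1 + |deriv (deriv ρ) 0| by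
    rw [abs_of_neg hρ'']; ring] at hlim
  refine hlim.congr' ?_
  filter_upwards [self_mem_nhdsWithin] with η hη
  have hdist : ‖t - (t + η • v)‖ = η := by
    rw [sub_add_cancel_left, norm_neg, norm_smul, hv, Real.norm_of_nonneg (le_of_lt hη), mul_one]
  rw [sub_self, sub_self, norm_zero, hdist, hρ0, mul_one, mul_one,
    dipole_norm_sq_eq (ne_of_gt hη)]
end

section
/- Let a ∈ ℝ, b ∈ ℝ, and ν^η = (a + b/η)δ_t - (b/η)δ_{t+ηv} with ‖v‖₂=1, and h(t₁,t₂)=ρ(‖t₁-t₂‖₂) with ρ ∈ C², ρ(0)=1, ρ'(0)=0. Then ‖ν^η‖²_h = a² + 2(ab/η)(1-ρ(η)) + 2(b²/η²)(1-ρ(η)), and consequently ‖ν^η‖²_h → a² + b²|ρ''(0)| as η → 0⁺. -/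
/-!
Since `‖t - (t + η • v)‖ = η` and `ρ 0 = 1`, the formula is a polynomial identity in `a + b/η`,
`b/η` and `ρ η`. For the limit write it as `a² + 2ab·η·q(η) + 2b²·q(η)` with
`q(η) = (1 - ρ η)/η²`; as `ρ'(0) = 0`, l'Hôpital gives `q(η) → -ρ''(0)/2`, so the cross term
vanishes and the last term tends to `-b²ρ''(0) = b²|ρ''(0)|`.
-/

open Filter Topology

lemma norm_sub_add_smul_of_norm_eq_one {E : Type*} [NormedAddCommGroup E] [NormedSpace ℝ E]
    (t : E) {v : E} (hv : ‖v‖ = 1) {η : ℝ} (hη : 0 ≤ η) : ‖t - (t + η • v)‖ = η := by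
  rw [sub_add_cancel_left, norm_neg, norm_smul, hv, Real.norm_of_nonneg hη, mul_one]

lemma dipole_energy_eq {E : Type*} [NormedAddCommGroup E] [NormedSpace ℝ E] {ρ : ℝ → ℝ}
    (hρ0 : ρ 0 = 1) (a b : ℝ) (t : E) {v : E} (hv : ‖v‖ = 1) {η : ℝ} (hη : 0 < η) :
    (a + b/η)^2 * ρ ‖t - t‖ + (b/η)^2 * ρ ‖(t + η • v) - (t + η • v)‖
        - 2 * (a + b/η) * (b/η) * ρ ‖t - (t + η • v)‖
      = a^2 + 2*(a*b/η)*(1 - ρ η) + 2*(b^2/η^2)*(1 - ρ η) := by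
  rw [sub_self, sub_self, norm_zero, norm_sub_add_smul_of_norm_eq_one t hv hη.le, hρ0]
  field_simp
  ring

lemma tendsto_sub_div_sq_nhdsGT_of_deriv_eq_zero {ρ : ℝ → ℝ} {c : ℝ}
    (hρ : Differentiable ℝ ρ) (hρ' : HasDerivAt (deriv ρ) c 0) (h0 : deriv ρ 0 = 0) :
    Tendsto (fun η => (ρ 0 - ρ η) / η ^ 2) (𝓝[>] 0) (𝓝 (-c / 2)) := by
  have hslope : Tendsto (fun η => deriv ρ η / η) (𝓝[>] 0) (𝓝 c) := by
    refine ((hasDerivAt_iff_tendsto_slope.mp hρ').mono_left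
      (nhdsWithin_mono _ fun x (hx : 0 < x) => hx.ne')).congr fun η => ?_
    rw [slope_def_field, h0, sub_zero, sub_zero]
  apply HasDerivAt.lhopital_zero_nhdsGT (f' := fun η => -deriv ρ η) (g' := fun η => 2 * η)
  · exact Eventually.of_forall fun x => (hρ x).hasDerivAt.const_sub _
  · exact Eventually.of_forall fun x => by simpa using hasDerivAt_pow 2 x
  · filter_upwards [self_mem_nhdsWithin] with x (hx : 0 < x)
    positivity
  · have hcont : Tendsto (fun η => ρ 0 - ρ η) (𝓝 0) (𝓝 (ρ 0 - ρ 0)) :=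
      (continuous_const.sub hρ.continuous).tendsto 0
    simpa using hcont.mono_left nhdsWithin_le_nhds
  · have hcont : Tendsto (fun η : ℝ => η ^ 2) (𝓝 0) (𝓝 (0 ^ 2)) := (continuous_pow 2).tendsto 0
    simpa using hcont.mono_left nhdsWithin_le_nhds
  · refine (hslope.neg.div_const 2).congr fun η => ?_
    ring

/-- For `ν^η = (a + b/η)δ_t - (b/η)δ_{t+ηv}` with `‖v‖₂ = 1` and kernel
`h(t₁,t₂) = ρ(‖t₁-t₂‖₂)`, `ρ ∈ C²`, `ρ(0)=1`, `ρ'(0)=0`, `ρ''(0)<0`: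
`‖ν^η‖²_h = a² + 2(ab/η)(1-ρ(η)) + 2(b²/η²)(1-ρ(η))` for `η > 0`, and
`‖ν^η‖²_h → a² + b²|ρ''(0)|` as `η → 0⁺`. -/
theorem dipole_norm_formula_and_limit {d : ℕ} (ρ : ℝ → ℝ)
    (hρ : ContDiff ℝ 2 ρ) (hρ0 : ρ 0 = 1) (hρ'0 : deriv ρ 0 = 0)
    (hρ'' : deriv (deriv ρ) 0 < 0)
    (a b : ℝ) (t v : EuclideanSpace ℝ (Fin d)) (hv : ‖v‖ = 1) :
    (∀ η : ℝ, 0 < η →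
      (a + b/η)^2 * ρ ‖t - t‖ + (b/η)^2 * ρ ‖(t + η • v) - (t + η • v)‖
        - 2 * (a + b/η) * (b/η) * ρ ‖t - (t + η • v)‖
      = a^2 + 2*(a*b/η)*(1 - ρ η) + 2*(b^2/η^2)*(1 - ρ η)) ∧
    Tendsto (fun η : ℝ =>
        (a + b/η)^2 * ρ ‖t - t‖ + (b/η)^2 * ρ ‖(t + η • v) - (t + η • v)‖
          - 2 * (a + b/η) * (b/η) * ρ ‖t - (t + η • v)‖)
      (𝓝[>] 0) (𝓝 (a^2 + b^2 * |deriv (deriv ρ) 0|)) := by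
  have hformula := fun η (hη : 0 < η) => dipole_energy_eq hρ0 a b t hv hη
  refine ⟨hformula, ?_⟩
  set c := deriv (deriv ρ) 0
  have hq : Tendsto (fun η => (1 - ρ η) / η ^ 2) (𝓝[>] 0) (𝓝 (-c / 2)) := by
    simpa only [hρ0] using tendsto_sub_div_sq_nhdsGT_of_deriv_eq_zero
      (hρ.differentiable (by norm_num)) (hρ.differentiable_deriv_two 0).hasDerivAt hρ'0
  have hid : Tendsto (fun η : ℝ => η) (𝓝[>] 0) (𝓝 0) := nhdsWithin_le_nhds
  have hlim := (tendsto_const_nhds (x := a ^ 2)).add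
    (((hid.mul hq).const_mul (2 * a * b)).add (hq.const_mul (2 * b ^ 2)))
  have hc : a ^ 2 + b ^ 2 * |c| = a ^ 2 + (2 * a * b * (0 * (-c / 2)) + 2 * b ^ 2 * (-c / 2)) := by
    rw [abs_of_neg hρ'']
    ring
  rw [hc]
  refine hlim.congr' ?_
  filter_upwards [self_mem_nhdsWithin] with η (hη : 0 < η)
  rw [hformula η hη]
  field_simp
  ring
end

section
/- Let g : ℝ^n → ℝ be C¹ with L-Lipschitz gradient, convex on an open convex set Λ containing a minimizer θ* of g, and suppose the gradient descent iterates θ_{n+1} = θ_n − τ ∇g(θ_n) all remain in Λ. If θ₀ ∈ Λ and 0 < τ < 1/L, then θ_n converges to a point θ̂ ∈ closure(Λ) with ∇g(θ̂) = 0, and g(θ_n) → g(θ*). -/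
/-!
For `L * τ ≤ 1` the descent lemma gives `g (x - τ ∇g x) ≤ g x - τ / 2 * ‖∇g x‖²`; combined with the
gradient inequality of convexity at a point `z ∈ closure Λ` this yields
`‖x⁺ - z‖² + 2τ (g x⁺ - g z) ≤ ‖x - z‖²` for the next iterate `x⁺`. With `z = θ*` the gaps
`g θₖ - g θ*` are summable, hence tend to `0`. The iterates are bounded, and every cluster point
`θ̂` has `g θ̂ = g θ*`, so the distance to `θ̂` is nonincreasing and the whole sequence converges
to `θ̂`, a fixed point of the continuous map `x ↦ x - τ ∇g x`.
-/

open Filter Topology Set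
open AffineMap (lineMap lineMap_apply_zero lineMap_apply_one lineMap_apply_module'
  hasDerivAt_lineMap)
open scoped RealInnerProductSpace Gradient NNReal

theorem image_one_le_of_deriv_le {φ φ' : ℝ → ℝ} {K : ℝ} (hφ : ∀ t, HasDerivAt φ (φ' t) t)
    (hφ' : ∀ t ∈ Ico (0 : ℝ) 1, φ' t ≤ φ' 0 + K * t) : φ 1 ≤ φ 0 + φ' 0 + K / 2 := by
  have hB : ∀ t, HasDerivAt (fun t => φ 0 + φ' 0 * t + K / 2 * t ^ 2) (φ' 0 + K * t) t := by
    intro t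
    have hlin : HasDerivAt (fun t => φ 0 + φ' 0 * t) (φ' 0) t := by
      simpa using ((hasDerivAt_id t).const_mul (φ' 0)).const_add (φ 0)
    have hsq : HasDerivAt (fun t => K / 2 * t ^ 2) (K * t) t :=
      ((hasDerivAt_pow 2 t).const_mul (K / 2)).congr_deriv (by norm_num; ring)
    exact hlin.add hsq
  have := image_le_of_deriv_right_le_deriv_boundary
    (fun t _ => (hφ t).continuousAt.continuousWithinAt) (fun t _ => (hφ t).hasDerivWithinAt)
    (by simp) (fun t _ => (hB t).continuousAt.continuousWithinAt)
    (fun t _ => (hB t).hasDerivWithinAt) hφ' (right_mem_Icc.2 zero_le_one)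
  simpa using this

variable {E : Type*} [NormedAddCommGroup E] [InnerProductSpace ℝ E] [CompleteSpace E]
  {g : E → ℝ} {L : ℝ≥0} {s : Set E} {τ : ℝ}

theorem DifferentiableAt.hasDerivAt_comp_lineMap {x y : E} {t : ℝ}
    (hg : DifferentiableAt ℝ g (lineMap x y t)) :
    HasDerivAt (g ∘ lineMap x y) ⟪∇ g (lineMap x y t), y - x⟫ t := by
  simpa using hg.hasGradientAt.hasFDerivAt.comp_hasDerivAt t hasDerivAt_lineMap

theorem image_add_le_of_lipschitzWith_gradient (hg : Differentiable ℝ g)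
    (hLip : LipschitzWith L (∇ g)) (x d : E) :
    g (x + d) ≤ g x + ⟪∇ g x, d⟫ + L / 2 * ‖d‖ ^ 2 := by
  set ℓ : ℝ →ᵃ[ℝ] E := lineMap x (x + d) with hℓ
  have hline : ∀ t, HasDerivAt (g ∘ ℓ) ⟪∇ g (ℓ t), d⟫ t := fun t => by
    simpa using (hg (ℓ t)).hasDerivAt_comp_lineMap
  have key := image_one_le_of_deriv_le hline (K := L * ‖d‖ ^ 2) fun t ht => by
    have hdist : ‖ℓ t - x‖ = t * ‖d‖ := by
      rw [hℓ, lineMap_apply_module', add_sub_cancel_left, add_sub_cancel_right, norm_smul,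
        Real.norm_of_nonneg ht.1]
    calc ⟪∇ g (ℓ t), d⟫
        = ⟪∇ g x, d⟫ + ⟪∇ g (ℓ t) - ∇ g x, d⟫ := by rw [inner_sub_left]; ring
      _ ≤ ⟪∇ g x, d⟫ + ‖∇ g (ℓ t) - ∇ g x‖ * ‖d‖ := by gcongr; exact real_inner_le_norm _ _
      _ ≤ ⟪∇ g x, d⟫ + L * (t * ‖d‖) * ‖d‖ := by
          gcongr; rw [← hdist, ← dist_eq_norm, ← dist_eq_norm]; exact hLip.dist_le_mul _ _
      _ = ⟪∇ g (ℓ 0), d⟫ + L * ‖d‖ ^ 2 * t := by rw [hℓ, lineMap_apply_zero]; ring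
  simp only [hℓ, Function.comp_apply, lineMap_apply_zero, lineMap_apply_one] at key
  linarith

theorem ConvexOn.add_inner_gradient_le (hconv : ConvexOn ℝ s g) {x y : E}
    (hg : DifferentiableAt ℝ g x) (hx : x ∈ s) (hy : y ∈ s) :
    g x + ⟪∇ g x, y - x⟫ ≤ g y := by
  have hline := (hconv.comp_affineMap (lineMap x y)).le_slope_of_hasDerivAt
    (x := 0) (y := 1) (by simpa using hx) (by simpa using hy) zero_lt_one
    (DifferentiableAt.hasDerivAt_comp_lineMap (by simpa using hg))
  rw [slope_def_field] at hline
  simp only [Function.comp_apply, lineMap_apply_zero, lineMap_apply_one] at hline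
  linarith

theorem ConvexOn.add_inner_gradient_le_of_mem_closure (hconv : ConvexOn ℝ s g)
    (hg : Continuous g) {x y : E} (hgx : DifferentiableAt ℝ g x) (hx : x ∈ s)
    (hy : y ∈ closure s) : g x + ⟪∇ g x, y - x⟫ ≤ g y :=
  closure_minimal (fun _ hz => hconv.add_inner_gradient_le hgx hx hz)
    (isClosed_le (by fun_prop) hg) hy

theorem summable_of_succ_add_le {a b : ℕ → ℝ} (ha : ∀ k, 0 ≤ a k) (hb : ∀ k, 0 ≤ b k)
    (h : ∀ k, b (k + 1) + a k ≤ b k) : Summable a := by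
  have hsum : ∀ n, ∑ k ∈ Finset.range n, a k + b n ≤ b 0 := by
    intro n
    induction n with
    | zero => simp
    | succ n ih => rw [Finset.sum_range_succ]; linarith [h n]
  exact summable_of_sum_range_le ha fun n => by linarith [hsum n, hb n]

theorem tendsto_of_subseq_tendsto_of_antitone_dist {X : Type*} [PseudoMetricSpace X]
    {u : ℕ → X} {x : X} {φ : ℕ → ℕ} (hφ : Tendsto (u ∘ φ) atTop (𝓝 x))
    (hanti : Antitone fun n => dist (u n) x) : Tendsto u atTop (𝓝 x) := by
  rw [Metric.tendsto_atTop]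
  intro ε hε
  obtain ⟨j, hj⟩ := Metric.tendsto_atTop.1 hφ ε hε
  exact ⟨φ j, fun n hn => (hanti hn).trans_lt (hj j le_rfl)⟩

theorem image_sub_smul_gradient_le (hg : Differentiable ℝ g) (hLip : LipschitzWith L (∇ g))
    (hτ : 0 ≤ τ) (hLτ : L * τ ≤ 1) (x : E) :
    g (x - τ • ∇ g x) ≤ g x - τ / 2 * ‖∇ g x‖ ^ 2 := by
  have h := image_add_le_of_lipschitzWith_gradient hg hLip x (-(τ • ∇ g x))
  rw [← sub_eq_add_neg, inner_neg_right, real_inner_smul_right, real_inner_self_eq_norm_sq,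
    norm_neg, norm_smul, Real.norm_of_nonneg hτ] at h
  nlinarith [mul_le_mul_of_nonneg_right hLτ (mul_nonneg hτ (sq_nonneg ‖∇ g x‖))]

theorem sq_norm_sub_smul_gradient_sub_add_le (hg : Differentiable ℝ g)
    (hLip : LipschitzWith L (∇ g)) (hτ : 0 ≤ τ) (hLτ : L * τ ≤ 1) {x z : E}
    (hz : g x + ⟪∇ g x, z - x⟫ ≤ g z) :
    ‖x - τ • ∇ g x - z‖ ^ 2 + 2 * τ * (g (x - τ • ∇ g x) - g z) ≤ ‖x - z‖ ^ 2 := by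
  have hdesc := image_sub_smul_gradient_le hg hLip hτ hLτ x
  have hexpand : ‖x - τ • ∇ g x - z‖ ^ 2
      = ‖x - z‖ ^ 2 + 2 * τ * ⟪∇ g x, z - x⟫ + τ ^ 2 * ‖∇ g x‖ ^ 2 := by
    rw [sub_right_comm, norm_sub_sq_real, real_inner_smul_right, norm_smul,
      Real.norm_of_nonneg hτ, ← neg_sub z x, inner_neg_left, real_inner_comm]
    ring
  nlinarith [mul_le_mul_of_nonneg_left hz (by positivity : 0 ≤ 2 * τ)]

def IsGradientDescentSeq (g : E → ℝ) (τ : ℝ) (u : ℕ → E) : Prop :=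
  ∀ k, u (k + 1) = u k - τ • ∇ g (u k)

namespace IsGradientDescentSeq

variable {u : ℕ → E}

theorem gradient_eq_zero_of_tendsto (hu : IsGradientDescentSeq g τ u) (hτ : τ ≠ 0) {x : E}
    (hcont : ContinuousAt (∇ g) x) (hlim : Tendsto u atTop (𝓝 x)) : ∇ g x = 0 := by
  have hstep : Tendsto (fun k => u (k + 1)) atTop (𝓝 (x - τ • ∇ g x)) := by
    rw [show (fun k => u (k + 1)) = fun k => u k - τ • ∇ g (u k) from funext hu]
    exact hlim.sub ((hcont.tendsto.comp hlim).const_smul τ)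
  have hfix : x - τ • ∇ g x = x :=
    tendsto_nhds_unique hstep (hlim.comp (tendsto_add_atTop_nat 1))
  simpa [hτ] using hfix

theorem sq_norm_succ_sub_add_le (hu : IsGradientDescentSeq g τ u)
    (hg : Differentiable ℝ g) (hLip : LipschitzWith L (∇ g))
    (hconv : ConvexOn ℝ s g) (hLτ : L * τ ≤ 1) (hin : ∀ k, u k ∈ s)
    (hτ : 0 ≤ τ) {z : E} (hz : z ∈ closure s) (k : ℕ) :
    ‖u (k + 1) - z‖ ^ 2 + 2 * τ * (g (u (k + 1)) - g z) ≤ ‖u k - z‖ ^ 2 := by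
  rw [hu k]
  exact sq_norm_sub_smul_gradient_sub_add_le hg hLip hτ hLτ
    (hconv.add_inner_gradient_le_of_mem_closure hg.continuous (hg _) (hin k) hz)

theorem antitone_dist (hu : IsGradientDescentSeq g τ u)
    (hg : Differentiable ℝ g) (hLip : LipschitzWith L (∇ g))
    (hconv : ConvexOn ℝ s g) (hLτ : L * τ ≤ 1) (hin : ∀ k, u k ∈ s) (hτ : 0 ≤ τ)
    {z : E} (hz : z ∈ closure s) (hgz : ∀ k, g z ≤ g (u k)) :
    Antitone fun k => dist (u k) z := by
  refine antitone_nat_of_succ_le fun k => ?_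
  have h := hu.sq_norm_succ_sub_add_le hg hLip hconv hLτ hin hτ hz k
  have hgap : 0 ≤ 2 * τ * (g (u (k + 1)) - g z) :=
    mul_nonneg (by positivity) (sub_nonneg.2 (hgz _))
  rw [dist_eq_norm, dist_eq_norm, ← pow_le_pow_iff_left₀ (norm_nonneg _) (norm_nonneg _)
    two_ne_zero]
  linarith

theorem tendsto_image (hu : IsGradientDescentSeq g τ u)
    (hg : Differentiable ℝ g) (hLip : LipschitzWith L (∇ g))
    (hconv : ConvexOn ℝ s g) (hLτ : L * τ ≤ 1) (hin : ∀ k, u k ∈ s) (hτ : 0 < τ)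
    {z : E} (hz : z ∈ s) (hmin : ∀ y ∈ s, g z ≤ g y) :
    Tendsto (fun k => g (u k)) atTop (𝓝 (g z)) := by
  have hsum : Summable fun k => 2 * τ * (g (u (k + 1)) - g z) :=
    summable_of_succ_add_le (fun k => mul_nonneg (by positivity) (sub_nonneg.2 (hmin _ (hin _))))
      (fun k => sq_nonneg ‖u k - z‖) (hu.sq_norm_succ_sub_add_le hg hLip hconv hLτ hin hτ.le
        (subset_closure hz))
  have hgap := (hsum.tendsto_atTop_zero.const_mul (2 * τ)⁻¹).add_const (g z)
  rw [← tendsto_add_atTop_iff_nat 1]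
  convert hgap using 2 <;> field_simp <;> ring

theorem exists_tendsto [ProperSpace E] (hu : IsGradientDescentSeq g τ u)
    (hg : Differentiable ℝ g) (hLip : LipschitzWith L (∇ g))
    (hconv : ConvexOn ℝ s g) (hLτ : L * τ ≤ 1) (hin : ∀ k, u k ∈ s) (hτ : 0 < τ)
    {z : E} (hz : z ∈ s) (hmin : ∀ y ∈ s, g z ≤ g y) :
    ∃ x ∈ closure s, Tendsto u atTop (𝓝 x) ∧ g x = g z := by
  have hval := hu.tendsto_image hg hLip hconv hLτ hin hτ hz hmin
  have hdist := hu.antitone_dist hg hLip hconv hLτ hin hτ.le (subset_closure hz)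
    fun k => hmin _ (hin k)
  obtain ⟨x, -, φ, hφ, hlim⟩ := tendsto_subseq_of_bounded Metric.isBounded_closedBall
    fun k => Metric.mem_closedBall.2 (hdist k.zero_le)
  have hx : x ∈ closure s := mem_closure_of_tendsto hlim (Eventually.of_forall fun j => hin (φ j))
  have hgx : g x = g z :=
    tendsto_nhds_unique ((hg.continuous.tendsto x).comp hlim) (hval.comp hφ.tendsto_atTop)
  refine ⟨x, hx, tendsto_of_subseq_tendsto_of_antitone_dist hlim ?_, hgx⟩
  exact hu.antitone_dist hg hLip hconv hLτ hin hτ.le hx fun k => hgx ▸ hmin _ (hin k)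

end IsGradientDescentSeq

theorem gradient_descent_converges_general {n : ℕ} (g : EuclideanSpace ℝ (Fin n) → ℝ)
    (hg : ContDiff ℝ 1 g) (L : NNReal)
    (hLip : LipschitzWith L (gradient g))
    (Λ : Set (EuclideanSpace ℝ (Fin n)))
    (hconv : ConvexOn ℝ Λ g)
    (θstar : EuclideanSpace ℝ (Fin n)) (hθstar : θstar ∈ Λ)
    (hmin : ∀ θ ∈ Λ, g θstar ≤ g θ)
    (τ : ℝ) (hτ0 : 0 < τ) (hτ : τ < 1 / (L : ℝ))
    (θseq : ℕ → EuclideanSpace ℝ (Fin n))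
    (hstep : ∀ i, θseq (i + 1) = θseq i - τ • gradient g (θseq i))
    (hin : ∀ i, θseq i ∈ Λ) :
    ∃ θhat ∈ closure Λ, Tendsto θseq atTop (𝓝 θhat) ∧ gradient g θhat = 0 ∧
      Tendsto (fun i => g (θseq i)) atTop (𝓝 (g θstar)) := by
  have hgd : Differentiable ℝ g := hg.differentiable one_ne_zero
  have hLτ : (L : ℝ) * τ ≤ 1 := (mul_le_mul_of_nonneg_left hτ.le L.coe_nonneg).trans
    (by rw [mul_one_div]; exact div_self_le_one _)
  have hu : IsGradientDescentSeq g τ θseq := hstep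
  obtain ⟨θhat, hθhat, hlim, -⟩ := hu.exists_tendsto hgd hLip hconv hLτ hin hτ0 hθstar hmin
  exact ⟨θhat, hθhat, hlim,
    hu.gradient_eq_zero_of_tendsto hτ0.ne' hLip.continuous.continuousAt hlim,
    hu.tendsto_image hgd hLip hconv hLτ hin hτ0 hθstar hmin⟩

/-- Convergence of fixed-step gradient descent: if `g` is `C¹` with `L`-Lipschitz
gradient, convex on an open convex set `Λ` containing a minimizer `θ*` of `g` over
`Λ`, the iterates stay in `Λ`, `θ₀ ∈ Λ` and `0 < τ < 1/L`, then the iterates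
converge to a critical point `θ̂ ∈ closure Λ` and `g(θₙ) → g(θ*)`. -/
theorem gradient_descent_converges {n : ℕ} (g : EuclideanSpace ℝ (Fin n) → ℝ)
    (hg : ContDiff ℝ 1 g) (L : NNReal) (hL : 0 < (L : ℝ))
    (hLip : LipschitzWith L (gradient g))
    (Λ : Set (EuclideanSpace ℝ (Fin n))) (hΛopen : IsOpen Λ) (hΛconv : Convex ℝ Λ)
    (hconv : ConvexOn ℝ Λ g)
    (θstar : EuclideanSpace ℝ (Fin n)) (hθstar : θstar ∈ Λ)
    (hmin : ∀ θ ∈ Λ, g θstar ≤ g θ)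
    (τ : ℝ) (hτ0 : 0 < τ) (hτ : τ < 1 / (L : ℝ))
    (θseq : ℕ → EuclideanSpace ℝ (Fin n))
    (hstep : ∀ i, θseq (i + 1) = θseq i - τ • gradient g (θseq i))
    (hin : ∀ i, θseq i ∈ Λ) (h0 : θseq 0 ∈ Λ) :
    ∃ θhat ∈ closure Λ, Tendsto θseq atTop (𝓝 θhat) ∧ gradient g θhat = 0 ∧
      Tendsto (fun i => g (θseq i)) atTop (𝓝 (g θstar)) :=
  gradient_descent_converges_general g hg L hLip Λ hconv θstar hθstar hmin τ hτ0 hτ θseq hstep hin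
end

section
/- Suppose a linear map A on measures satisfies the two-sided restricted isometry (1−γ)‖x‖²_h ≤ ‖Ax‖²₂ ≤ (1+γ)‖x‖²_h on a symmetric set Σ−Σ containing x − x', and let π₁,…,π_k be ε-separated dipoles with pairwise coherence |⟨πᵢ,πⱼ⟩_h| ≤ μ‖πᵢ‖_h‖πⱼ‖_h (i≠j), with Σπᵢ ∈ Σ−Σ. Then (1−γ)(1−(k−1)μ)·Σᵢ‖πᵢ‖²_h ≤ ‖A(Σᵢ πᵢ)‖²₂ ≤ (1+γ)(1+(k−1)μ)·Σᵢ‖πᵢ‖²_h. -/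
/-!
Expanding `‖∑ᵢ πᵢ‖²` as a Gram sum, the off-diagonal terms are bounded by coherence:
`|‖∑ᵢ πᵢ‖² - ∑ᵢ ‖πᵢ‖²| ≤ μ ∑_{i ≠ j} ‖πᵢ‖‖πⱼ‖ ≤ (k - 1) μ ∑ᵢ ‖πᵢ‖²`, the last step being
Cauchy–Schwarz `(∑ᵢ ‖πᵢ‖)² ≤ k ∑ᵢ ‖πᵢ‖²`. Chaining this with the restricted isometry at
`∑ᵢ πᵢ` gives both bounds.
-/

open Finset RealInnerProductSpace

section

variable {ι : Type*} [Fintype ι] [DecidableEq ι]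

lemma sum_sum_erase_eq_sub {G : Type*} [AddCommGroup G] (f : ι → ι → G) :
    ∑ i, ∑ j ∈ univ.erase i, f i j = ∑ i, ∑ j, f i j - ∑ i, f i i := by
  simp only [sum_erase_eq_sub (mem_univ _), sum_sub_distrib]

lemma sum_sum_erase_mul_le (a : ι → ℝ) :
    ∑ i, ∑ j ∈ univ.erase i, a i * a j ≤ (Fintype.card ι - 1) * ∑ i, a i ^ 2 := by
  have hCS := sq_sum_le_card_mul_sum_sq (s := univ) (f := a)
  rw [card_univ, sq, sum_mul_sum] at hCS
  rw [sum_sum_erase_eq_sub]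
  simp only [← sq]
  linarith

variable {V : Type*} [NormedAddCommGroup V] [InnerProductSpace ℝ V]

lemma norm_sum_sq_sub_sum_norm_sq (π : ι → V) :
    ‖∑ i, π i‖ ^ 2 - ∑ i, ‖π i‖ ^ 2 = ∑ i, ∑ j ∈ univ.erase i, ⟪π i, π j⟫ := by
  rw [sum_sum_erase_eq_sub, ← real_inner_self_eq_norm_sq, sum_inner]
  simp only [inner_sum, real_inner_self_eq_norm_sq]

lemma abs_norm_sum_sq_sub_sum_norm_sq_le {μ : ℝ} (hμ : 0 ≤ μ) (π : ι → V)
    (hcoh : ∀ i j, i ≠ j → |⟪π i, π j⟫| ≤ μ * ‖π i‖ * ‖π j‖) :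
    |‖∑ i, π i‖ ^ 2 - ∑ i, ‖π i‖ ^ 2| ≤ (Fintype.card ι - 1) * μ * ∑ i, ‖π i‖ ^ 2 := by
  rw [norm_sum_sq_sub_sum_norm_sq]
  calc |∑ i, ∑ j ∈ univ.erase i, ⟪π i, π j⟫|
      ≤ ∑ i, ∑ j ∈ univ.erase i, |⟪π i, π j⟫| :=
        (abs_sum_le_sum_abs _ _).trans (sum_le_sum fun i _ => abs_sum_le_sum_abs _ _)
    _ ≤ ∑ i, ∑ j ∈ univ.erase i, μ * (‖π i‖ * ‖π j‖) :=
        sum_le_sum fun i _ => sum_le_sum fun j hj =>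
          (hcoh i j (ne_of_mem_erase hj).symm).trans_eq (mul_assoc _ _ _)
    _ = μ * ∑ i, ∑ j ∈ univ.erase i, ‖π i‖ * ‖π j‖ := by simp only [mul_sum]
    _ ≤ μ * ((Fintype.card ι - 1) * ∑ i, ‖π i‖ ^ 2) :=
        mul_le_mul_of_nonneg_left (sum_sum_erase_mul_le _) hμ
    _ = (Fintype.card ι - 1) * μ * ∑ i, ‖π i‖ ^ 2 := by ring

end

theorem rip_on_coherent_family_general {V : Type*} [NormedAddCommGroup V]
    [InnerProductSpace ℝ V] {m k : ℕ}
    (A : V →ₗ[ℝ] EuclideanSpace ℝ (Fin m)) (S : Set V)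
    (γ μ : ℝ) (hγ0 : 0 ≤ γ) (hγ1 : γ < 1) (hμ : 0 ≤ μ)
    (hRIP : ∀ x ∈ S, (1 - γ) * ‖x‖^2 ≤ ‖A x‖^2 ∧ ‖A x‖^2 ≤ (1 + γ) * ‖x‖^2)
    (π : Fin k → V)
    (hcoh : ∀ i j, i ≠ j → |(inner ℝ (π i) (π j) : ℝ)| ≤ μ * ‖π i‖ * ‖π j‖)
    (hsum : (∑ i, π i) ∈ S) :
    (1 - γ) * (1 - ((k : ℝ) - 1) * μ) * ∑ i, ‖π i‖^2 ≤ ‖A (∑ i, π i)‖^2 ∧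
      ‖A (∑ i, π i)‖^2 ≤ (1 + γ) * (1 + ((k : ℝ) - 1) * μ) * ∑ i, ‖π i‖^2 := by
  obtain ⟨hlo, hhi⟩ := hRIP _ hsum
  have hdev := abs_norm_sum_sq_sub_sum_norm_sq_le hμ π hcoh
  rw [Fintype.card_fin] at hdev
  obtain ⟨hdev_lo, hdev_hi⟩ := abs_le.mp hdev
  constructor
  · calc (1 - γ) * (1 - ((k : ℝ) - 1) * μ) * ∑ i, ‖π i‖^2
        = (1 - γ) * ((1 - ((k : ℝ) - 1) * μ) * ∑ i, ‖π i‖^2) := mul_assoc _ _ _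
      _ ≤ (1 - γ) * ‖∑ i, π i‖^2 := by gcongr; linarith
      _ ≤ ‖A (∑ i, π i)‖^2 := hlo
  · calc ‖A (∑ i, π i)‖^2 ≤ (1 + γ) * ‖∑ i, π i‖^2 := hhi
      _ ≤ (1 + γ) * ((1 + ((k : ℝ) - 1) * μ) * ∑ i, ‖π i‖^2) := by
        gcongr; linarith
      _ = (1 + γ) * (1 + ((k : ℝ) - 1) * μ) * ∑ i, ‖π i‖^2 := (mul_assoc _ _ _).symm

/-- RIP combined with coherence: if `A` satisfies the two-sided restricted isometry
with constant `γ` on a set `S` containing `Σᵢ πᵢ`, and the `πᵢ` are pairwise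
`μ`-coherent, then
`(1-γ)(1-(k-1)μ) Σ‖πᵢ‖² ≤ ‖A(Σπᵢ)‖² ≤ (1+γ)(1+(k-1)μ) Σ‖πᵢ‖²`. -/
theorem rip_on_coherent_family {V : Type*} [NormedAddCommGroup V]
    [InnerProductSpace ℝ V] {m k : ℕ}
    (A : V →ₗ[ℝ] EuclideanSpace ℝ (Fin m)) (S : Set V)
    (γ μ : ℝ) (hγ0 : 0 ≤ γ) (hγ1 : γ < 1) (hμ : 0 ≤ μ)
    (hkμ : ((k : ℝ) - 1) * μ < 1)
    (hRIP : ∀ x ∈ S, (1 - γ) * ‖x‖^2 ≤ ‖A x‖^2 ∧ ‖A x‖^2 ≤ (1 + γ) * ‖x‖^2)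
    (π : Fin k → V)
    (hcoh : ∀ i j, i ≠ j → |(inner ℝ (π i) (π j) : ℝ)| ≤ μ * ‖π i‖ * ‖π j‖)
    (hsum : (∑ i, π i) ∈ S) :
    (1 - γ) * (1 - ((k : ℝ) - 1) * μ) * ∑ i, ‖π i‖^2 ≤ ‖A (∑ i, π i)‖^2 ∧
      ‖A (∑ i, π i)‖^2 ≤ (1 + γ) * (1 + ((k : ℝ) - 1) * μ) * ∑ i, ‖π i‖^2 :=
  rip_on_coherent_family_general A S γ μ hγ0 hγ1 hμ hRIP π hcoh hsum
end
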